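/- arXiv:2505.13639 — 3 statements merged into one kernel-verified Lean document; each statement's English description precedes it below -/
import Mathlib

section
/- Let Γ₁, Γ₂ be nontrivial groups with Γ₁ * Γ₂ ≠ ℤ/2 * ℤ/2 (equivalently, at least one of Γ₁, Γ₂ has order greater than 2). Then the free product Γ₁ * Γ₂ has no nontrivial finite normal subgroup. -/
open Monoid Monoid.CoprodI Monoid.CoprodI.Word

namespace Stmt5Aux

section Len

variable {ι : Type*} {M : ι → Type*} [∀ i, Group (M i)] [DecidableEq ι]
  [∀ i, DecidableEq (M i)]

/-- Length of the reduced word of an element of the free product. -/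
def wlen (x : CoprodI M) : ℕ := (Word.equiv x).toList.length

lemma equiv_prod (w : Word M) : Word.equiv (w.prod) = w :=
  Word.equiv.apply_symm_apply w

lemma prod_equiv (x : CoprodI M) : Word.prod (Word.equiv x) = x :=
  Word.equiv.symm_apply_apply x

lemma wlen_prod (w : Word M) : wlen (w.prod) = w.toList.length := by
  rw [wlen, equiv_prod]

lemma eq_one_of_wlen_eq_zero {x : CoprodI M} (h : wlen x = 0) : x = 1 := by
  have h1 : Word.equiv x = Word.empty := by
    apply Word.ext
    simpa [wlen, List.length_eq_zero_iff] using h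
  have := prod_equiv x
  rw [h1, Word.prod_empty] at this
  exact this.symm

lemma wlen_neword {i j} (w : NeWord M i j) : wlen w.prod = w.toList.length := by
  rw [NeWord.prod, wlen_prod]
  rfl

lemma exists_neword {x : CoprodI M} (hx : x ≠ 1) :
    ∃ (i j : ι) (w : NeWord M i j), w.prod = x := by
  have hne : Word.equiv x ≠ Word.empty := by
    intro hh
    exact hx (by simpa [hh] using (prod_equiv x).symm)
  obtain ⟨i, j, w, hw⟩ := NeWord.of_word (Word.equiv x) hne
  refine ⟨i, j, w, ?_⟩
  rw [NeWord.prod, hw, prod_equiv]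

lemma replaceHead_toList_length {i j} (x : M i) (h : x ≠ 1) (w : NeWord M i j) :
    (NeWord.replaceHead x h w).toList.length = w.toList.length := by
  induction w with
  | singleton => rfl
  | append w₁ hne w₂ ih₁ ih₂ => simp [NeWord.replaceHead, ih₁]

lemma mulHead_toList_length {i j} (w : NeWord M i j) (x : M i) (h : x * w.head ≠ 1) :
    (NeWord.mulHead w x h).toList.length = w.toList.length :=
  replaceHead_toList_length _ _ _

lemma inv_toList_length {i j} (w : NeWord M i j) :
    w.inv.toList.length = w.toList.length := by
  induction w with
  | singleton => rfl
  | append w₁ hne w₂ ih₁ ih₂ => simp [NeWord.inv, ih₁, ih₂]; omega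

lemma wlen_inv (x : CoprodI M) : wlen x⁻¹ = wlen x := by
  rcases eq_or_ne x 1 with rfl | hx
  · simp
  · obtain ⟨i, j, w, rfl⟩ := exists_neword hx
    rw [← NeWord.inv_prod, wlen_neword, wlen_neword, inv_toList_length]

end Len

section Bool

variable {M : Bool → Type*} [∀ i, Group (M i)] [∀ i, DecidableEq (M i)]
  [∀ i, Nontrivial (M i)]

lemma exists_conj_gt
    (hbig : ∃ (k : Bool) (a b : M k), a ≠ 1 ∧ b ≠ 1 ∧ a ≠ b)
    {x : CoprodI M} (hx : x ≠ 1) :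
    ∃ c : CoprodI M, wlen x < wlen (c * x * c⁻¹) := by
  obtain ⟨i, j, w, rfl⟩ := exists_neword hx
  rcases eq_or_ne i j with rfl | hij
  · -- conjugate by a nontrivial element of the other factor
    obtain ⟨a, ha⟩ := exists_ne (1 : M (!i))
    have hki : (!i) ≠ i := by simp
    have ha' : a⁻¹ ≠ 1 := inv_ne_one.mpr ha
    refine ⟨CoprodI.of a, ?_⟩
    have : CoprodI.of a * w.prod * (CoprodI.of a)⁻¹ =
        (((NeWord.singleton a ha).append hki w).append hki.symm
          (NeWord.singleton a⁻¹ ha')).prod := by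
      simp [mul_assoc]
    rw [this, wlen_neword, wlen_neword]
    simp [NeWord.toList]
  · -- i ≠ j; use the big factor
    obtain ⟨k, a, b, ha, hb, hab⟩ := hbig
    have hk : k = i ∨ k = j := by
      cases k <;> cases i <;> cases j <;> simp_all
    rcases hk with rfl | rfl
    · -- pick y ≠ 1 with y * w.head ≠ 1
      obtain ⟨y, hy1, hy⟩ : ∃ y : M k, y ≠ 1 ∧ y * w.head ≠ 1 := by
        rcases eq_or_ne (a * w.head) 1 with haw | haw
        · refine ⟨b, hb, ?_⟩
          intro hbw
          exact hab (by
            rw [← inv_eq_iff_mul_eq_one] at haw hbw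
            exact inv_injective (haw.trans hbw.symm))
        · exact ⟨a, ha, haw⟩
      refine ⟨CoprodI.of y, ?_⟩
      have hy' : y⁻¹ ≠ 1 := inv_ne_one.mpr hy1
      have : CoprodI.of y * w.prod * (CoprodI.of y)⁻¹ =
          ((w.mulHead y hy).append hij.symm (NeWord.singleton y⁻¹ hy')).prod := by
        simp [mul_assoc]
      rw [this, wlen_neword, wlen_neword]
      simp [NeWord.toList, mulHead_toList_length]
    · -- work with the inverse word
      obtain ⟨y, hy1, hy⟩ : ∃ y : M k, y ≠ 1 ∧ y * w.inv.head ≠ 1 := by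
        rcases eq_or_ne (a * w.inv.head) 1 with haw | haw
        · refine ⟨b, hb, ?_⟩
          intro hbw
          exact hab (by
            rw [← inv_eq_iff_mul_eq_one] at haw hbw
            exact inv_injective (haw.trans hbw.symm))
        · exact ⟨a, ha, haw⟩
      refine ⟨CoprodI.of y, ?_⟩
      have hy' : y⁻¹ ≠ 1 := inv_ne_one.mpr hy1
      have key : (CoprodI.of y * w.prod * (CoprodI.of y)⁻¹)⁻¹ =
          ((w.inv.mulHead y hy).append hij (NeWord.singleton y⁻¹ hy')).prod := by
        simp [mul_assoc]
      have := congrArg wlen key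
      rw [wlen_inv, wlen_neword] at this
      rw [this, wlen_neword]
      simp only [NeWord.toList, List.length_append, List.length_cons, List.length_nil,
        mulHead_toList_length, inv_toList_length]
      omega

lemma coprodI_bool
    (hbig : ∃ (k : Bool) (a b : M k), a ≠ 1 ∧ b ≠ 1 ∧ a ≠ b)
    (N : Subgroup (CoprodI M)) (hN : N.Normal)
    (hfin : (N : Set (CoprodI M)).Finite) : N = ⊥ := by
  by_contra hbot
  obtain ⟨⟨n, hnN⟩, hn1⟩ := Subgroup.ne_bot_iff_exists_ne_one.mp hbot
  have hn1 : n ≠ 1 := by simpa [Subgroup.mk_eq_one] using hn1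
  obtain ⟨m, hmS, hmax⟩ := Finset.exists_max_image hfin.toFinset wlen
    ⟨n, hfin.mem_toFinset.mpr hnN⟩
  have hmN : m ∈ N := hfin.mem_toFinset.mp hmS
  have hm1 : m ≠ 1 := by
    intro hm
    have h0 : wlen m = 0 := by
      rw [hm]
      have : (1 : CoprodI M) = Word.prod Word.empty := by simp
      rw [this, wlen_prod]
      rfl
    have hn0 : wlen n = 0 := Nat.le_zero.mp (h0 ▸ hmax n (hfin.mem_toFinset.mpr hnN))
    exact hn1 (eq_one_of_wlen_eq_zero hn0)
  obtain ⟨c, hc⟩ := exists_conj_gt hbig hm1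
  have : c * m * c⁻¹ ∈ N := hN.conj_mem m hmN c
  exact absurd (hmax _ (hfin.mem_toFinset.mpr this)) (not_le.mpr hc)

end Bool

lemma three_elems {K : Type*} [Group K] [Nontrivial K] (h : Nat.card K ≠ 2) :
    ∃ a b : K, a ≠ 1 ∧ b ≠ 1 ∧ a ≠ b := by
  obtain ⟨a, ha⟩ := exists_ne (1 : K)
  by_contra hcon
  push_neg at hcon
  apply h
  rw [Nat.card_eq_two_iff]
  refine ⟨1, a, ha.symm, ?_⟩
  ext x
  simp only [Set.mem_insert_iff, Set.mem_singleton_iff, Set.mem_univ, iff_true]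
  rcases eq_or_ne x 1 with rfl | hx
  · exact Or.inl rfl
  · exact Or.inr (hcon a x ha hx).symm

end Stmt5Aux
namespace Stmt5Aux

universe u v

/-- The two factors as a `Bool`-indexed family (lifted to a common universe). -/
def Fac (G : Type u) (H : Type v) : Bool → Type (max u v) :=
  fun b => Bool.rec (ULift.{u} H) (ULift.{v} G) b

instance FacGroup (G : Type u) (H : Type v) [Group G] [Group H] : ∀ b, Group (Fac G H b) :=
  fun b => Bool.rec (motive := fun b => Group (Fac G H b))
    (inferInstanceAs (Group (ULift H))) (inferInstanceAs (Group (ULift G))) b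

instance FacNontrivial (G : Type u) (H : Type v) [Group G] [Group H] [Nontrivial G]
    [Nontrivial H] : ∀ b, Nontrivial (Fac G H b) :=
  fun b => Bool.rec (motive := fun b => Nontrivial (Fac G H b))
    (inferInstanceAs (Nontrivial (ULift H))) (inferInstanceAs (Nontrivial (ULift G))) b

variable (G : Type u) (H : Type v) [Group G] [Group H]

/-- The natural map `G ∗ H →* CoprodI (Fac G H)`. -/
def toCoprodI : Monoid.Coprod G H →* Monoid.CoprodI (Fac G H) :=
  Monoid.Coprod.lift
    ((Monoid.CoprodI.of (i := true)).comp (MulEquiv.ulift.symm : G ≃* ULift G).toMonoidHom)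
    ((Monoid.CoprodI.of (i := false)).comp (MulEquiv.ulift.symm : H ≃* ULift H).toMonoidHom)

/-- The natural map `CoprodI (Fac G H) →* G ∗ H`. -/
def ofCoprodI : Monoid.CoprodI (Fac G H) →* Monoid.Coprod G H :=
  Monoid.CoprodI.lift (fun b => Bool.rec
    (motive := fun b => Fac G H b →* Monoid.Coprod G H)
    (Monoid.Coprod.inr.comp (MulEquiv.ulift : ULift H ≃* H).toMonoidHom)
    (Monoid.Coprod.inl.comp (MulEquiv.ulift : ULift G ≃* G).toMonoidHom) b)

variable {G H}

lemma of_to (x : Monoid.Coprod G H) : ofCoprodI G H (toCoprodI G H x) = x := by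
  have : (ofCoprodI G H).comp (toCoprodI G H) = MonoidHom.id _ := by
    apply Monoid.Coprod.hom_ext
    · ext x
      simp only [toCoprodI, ofCoprodI, MonoidHom.comp_apply, Monoid.Coprod.lift_apply_inl,
        Monoid.CoprodI.lift_of, MonoidHom.id_apply, MulEquiv.coe_toMonoidHom]
      rfl
    · ext x
      simp only [toCoprodI, ofCoprodI, MonoidHom.comp_apply, Monoid.Coprod.lift_apply_inr,
        Monoid.CoprodI.lift_of, MonoidHom.id_apply, MulEquiv.coe_toMonoidHom]
      rfl
  exact DFunLike.congr_fun this x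

lemma to_of (x : Monoid.CoprodI (Fac G H)) : toCoprodI G H (ofCoprodI G H x) = x := by
  have : (toCoprodI G H).comp (ofCoprodI G H) = MonoidHom.id _ := by
    apply Monoid.CoprodI.ext_hom
    intro i
    cases i <;> ext x <;>
      · simp only [toCoprodI, ofCoprodI, MonoidHom.comp_apply, Monoid.CoprodI.lift_of,
          Monoid.Coprod.lift_apply_inl, Monoid.Coprod.lift_apply_inr, MonoidHom.id_apply,
          MulEquiv.coe_toMonoidHom]
        rfl
  exact DFunLike.congr_fun this x

end Stmt5Aux

/-- Let `Γ₁, Γ₂` be nontrivial groups, not both of order 2 (so that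
`Γ₁ * Γ₂ ≠ ℤ/2 * ℤ/2`). Then the free product `Γ₁ * Γ₂` has no nontrivial finite normal
subgroup. -/
theorem stmt_5 (G H : Type*) [Group G] [Group H] [Nontrivial G] [Nontrivial H]
    (h : ¬ (Nat.card G = 2 ∧ Nat.card H = 2))
    (N : Subgroup (Monoid.Coprod G H)) (hN : N.Normal)
    (hfin : (N : Set (Monoid.Coprod G H)).Finite) :
    N = ⊥ := by
  classical
  have hbig : ∃ (k : Bool) (a b : Stmt5Aux.Fac G H k), a ≠ 1 ∧ b ≠ 1 ∧ a ≠ b := by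
    rcases not_and_or.mp h with h' | h'
    · obtain ⟨a, b, ha, hb, hab⟩ := Stmt5Aux.three_elems h'
      exact ⟨true, ULift.up a, ULift.up b, fun hh => ha (congrArg ULift.down hh),
        fun hh => hb (congrArg ULift.down hh), fun hh => hab (congrArg ULift.down hh)⟩
    · obtain ⟨a, b, ha, hb, hab⟩ := Stmt5Aux.three_elems h'
      exact ⟨false, ULift.up a, ULift.up b, fun hh => ha (congrArg ULift.down hh),
        fun hh => hb (congrArg ULift.down hh), fun hh => hab (congrArg ULift.down hh)⟩
  set f := Stmt5Aux.toCoprodI G H with hf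
  have hfsurj : Function.Surjective f := fun y => ⟨Stmt5Aux.ofCoprodI G H y, Stmt5Aux.to_of y⟩
  have hfinj : Function.Injective f := fun a b hab => by
    have := congrArg (Stmt5Aux.ofCoprodI G H) hab
    rwa [Stmt5Aux.of_to, Stmt5Aux.of_to] at this
  have h1 : (N.map f) = ⊥ :=
    Stmt5Aux.coprodI_bool hbig (N.map f) (hN.map f hfsurj)
      (by rw [Subgroup.coe_map]; exact hfin.image f)
  exact (N.map_eq_bot_iff_of_injective hfinj).mp h1
end

section
/- Let k be a nonarchimedean valued field with valuation ring O, maximal ideal m, uniformizer π. Let U = (1 + πm) × (1 + πm) ⊆ k². For a nontrivial pair of integers (m,n) ≠ (0,0) and diagonal affine maps x ↦ (α₁^m β₁^n x₁, α₂^m β₂^n x₂) where α₁, β₂ have valuations that are nonzero multiples of a fixed prime p and lie in π^{val}·(1+πm), and α₂, β₁ ∈ 1 + πm, with the constraint that the map is not the identity: the image γU of U is disjoint from U. -/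
/-- With `val` a discrete valuation on `k`, uniformizer `π`,
`U = (1+πm) × (1+πm) ⊆ k²`, let `γ = diag(α₁^m β₁^n, α₂^m β₂^n)` with `(m,n) ≠ (0,0)`,
where `α₂, β₁ ∈ 1+πm` and `α₁, β₂` have valuations that are nonzero multiples of a prime
`p` and lie in `π^{val}·(1+πm)`. Then `γU` is disjoint from `U`. -/
theorem stmt_12 (k : Type*) [Field k] (val : k → ℤ) (π : k)
    (hval0 : val 0 = 0) (hπ0 : π ≠ 0) (hπ1 : val π = 1)
    (hmul : ∀ x y : k, x ≠ 0 → y ≠ 0 → val (x * y) = val x + val y)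
    (hadd : ∀ x y : k, x ≠ 0 → y ≠ 0 → x + y ≠ 0 → min (val x) (val y) ≤ val (x + y))
    (p : ℕ) (hp : p.Prime)
    (α₁ α₂ β₁ β₂ : k) (hα₁0 : α₁ ≠ 0) (hβ₂0 : β₂ ≠ 0)
    (s t : ℤ) (hs : s ≠ 0) (ht : t ≠ 0)
    (hvα₁ : val α₁ = (p : ℤ) * s) (hvβ₂ : val β₂ = (p : ℤ) * t)
    (hα₁u : α₁ * (π ^ val α₁)⁻¹ - 1 = 0 ∨ 2 ≤ val (α₁ * (π ^ val α₁)⁻¹ - 1))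
    (hβ₂u : β₂ * (π ^ val β₂)⁻¹ - 1 = 0 ∨ 2 ≤ val (β₂ * (π ^ val β₂)⁻¹ - 1))
    (hα₂ : α₂ - 1 = 0 ∨ 2 ≤ val (α₂ - 1)) (hβ₁ : β₁ - 1 = 0 ∨ 2 ≤ val (β₁ - 1))
    (m n : ℤ) (hmn : (m, n) ≠ (0, 0))
    (x₁ x₂ : k)
    (hx₁ : x₁ - 1 = 0 ∨ 2 ≤ val (x₁ - 1)) (hx₂ : x₂ - 1 = 0 ∨ 2 ≤ val (x₂ - 1)) :
    ¬ ((α₁ ^ m * β₁ ^ n * x₁ - 1 = 0 ∨ 2 ≤ val (α₁ ^ m * β₁ ^ n * x₁ - 1)) ∧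
       (α₂ ^ m * β₂ ^ n * x₂ - 1 = 0 ∨ 2 ≤ val (α₂ ^ m * β₂ ^ n * x₂ - 1))) := by
  -- basic facts
  have val1 : val 1 = 0 := by
    have := hmul 1 1 one_ne_zero one_ne_zero
    simp at this; omega
  have valneg1 : val (-1 : k) = 0 := by
    have := hmul (-1 : k) (-1) (by norm_num) (by norm_num)
    simp [val1] at this; omega
  have valneg : ∀ x : k, x ≠ 0 → val (-x) = val x := by
    intro x hx
    have := hmul (-1 : k) x (by norm_num) hx
    rw [neg_one_mul] at this; rw [this, valneg1]; ring
  have valinv : ∀ x : k, x ≠ 0 → val x⁻¹ = -val x := by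
    intro x hx
    have := hmul x x⁻¹ hx (inv_ne_zero hx)
    rw [mul_inv_cancel₀ hx, val1] at this; omega
  -- elements of 1+πm are units of valuation 0
  have unit : ∀ y : k, (y - 1 = 0 ∨ 2 ≤ val (y - 1)) → y ≠ 0 ∧ val y = 0 := by
    intro y hy
    rcases hy with hy | hy
    · rw [sub_eq_zero] at hy
      subst hy
      exact ⟨one_ne_zero, val1⟩
    · have hy0 : y ≠ 0 := by
        intro h; rw [h] at hy; simp [valneg1] at hy
      have hy1 : y - 1 ≠ 0 := by
        intro h; rw [h, hval0] at hy; omega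
      refine ⟨hy0, ?_⟩
      have h1 : (0 : ℤ) ≤ val y := by
        have := hadd 1 (y - 1) one_ne_zero hy1 (by rw [add_sub_cancel]; exact hy0)
        rw [add_sub_cancel, val1] at this; omega
      have h2 : val y ≤ 0 := by
        have h1y : (1 : k) - y ≠ 0 := sub_ne_zero.mpr (Ne.symm (sub_ne_zero.mp hy1))
        have hv1y : val (1 - y) = val (y - 1) := by
          rw [← neg_sub y 1, valneg _ hy1]
        have := hadd y (1 - y) hy0 h1y (by rw [add_sub_cancel]; exact one_ne_zero)
        rw [add_sub_cancel, val1, hv1y] at this; omega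
      omega
  -- valuation of integer powers
  have vzpow : ∀ (x : k), x ≠ 0 → ∀ (j : ℤ), val (x ^ j) = j * val x := by
    intro x hx j
    induction j using Int.induction_on with
    | zero => simpa using val1
    | succ i ih =>
        rw [zpow_add_one₀ hx, hmul _ _ (zpow_ne_zero _ hx) hx, ih]; ring
    | pred i ih =>
        rw [zpow_sub_one₀ hx, hmul _ _ (zpow_ne_zero _ hx) (inv_ne_zero hx),
          valinv x hx, ih]; ring
  rintro ⟨h1, h2⟩
  obtain ⟨hβ₁0, hvβ₁⟩ := unit β₁ hβ₁
  obtain ⟨hα₂0, hvα₂⟩ := unit α₂ hα₂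
  obtain ⟨hx₁0, hvx₁⟩ := unit x₁ hx₁
  obtain ⟨hx₂0, hvx₂⟩ := unit x₂ hx₂
  obtain ⟨-, hv1⟩ := unit _ h1
  obtain ⟨-, hv2⟩ := unit _ h2
  have e1 : val (α₁ ^ m * β₁ ^ n * x₁) = m * ((p : ℤ) * s) := by
    rw [hmul _ _ (mul_ne_zero (zpow_ne_zero _ hα₁0) (zpow_ne_zero _ hβ₁0)) hx₁0,
      hmul _ _ (zpow_ne_zero _ hα₁0) (zpow_ne_zero _ hβ₁0),
      vzpow _ hα₁0, vzpow _ hβ₁0, hvα₁, hvβ₁, hvx₁]; ring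
  have e2 : val (α₂ ^ m * β₂ ^ n * x₂) = n * ((p : ℤ) * t) := by
    rw [hmul _ _ (mul_ne_zero (zpow_ne_zero _ hα₂0) (zpow_ne_zero _ hβ₂0)) hx₂0,
      hmul _ _ (zpow_ne_zero _ hα₂0) (zpow_ne_zero _ hβ₂0),
      vzpow _ hα₂0, vzpow _ hβ₂0, hvα₂, hvβ₂, hvx₂]; ring
  rw [hv1] at e1
  rw [hv2] at e2
  have hp0 : (p : ℤ) ≠ 0 := by exact_mod_cast hp.ne_zero
  have hm : m = 0 := by
    rcases mul_eq_zero.mp e1.symm with h | h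
    · exact h
    · exact absurd (mul_eq_zero.mp h) (by simp [hp0, hs, hp.ne_zero])
  have hn : n = 0 := by
    rcases mul_eq_zero.mp e2.symm with h | h
    · exact h
    · exact absurd (mul_eq_zero.mp h) (by simp [hp0, ht, hp.ne_zero])
  exact hmn (by simp [hm, hn])
end

section
/- Let k be a nonarchimedean valued field with uniformizer π and maximal ideal m. Let x ∈ (1+πm) × (1+πm) ⊆ k², and let L be an affine line through x with slope s ∈ π + πm. Then L is disjoint from any set of the form γ·U where U = (1+πm)×(1+πm) and γ is a nontrivial diagonal transformation as in the main construction; concretely: for any y, y' ∈ U with y' = γy for nontrivial γ ∈ Δ, the slope (y'₂ − x₂)/(y'₁ − x₁) of the line joining x to y' does not lie in π + πm. -/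
set_option linter.unusedSectionVars false
namespace Stmt18Aux

variable {k : Type*} [Field k] {val : k → ℤ}

section
variable (hmul : ∀ x y : k, x ≠ 0 → y ≠ 0 → val (x * y) = val x + val y)
variable (hadd : ∀ x y : k, x ≠ 0 → y ≠ 0 → x + y ≠ 0 → min (val x) (val y) ≤ val (x + y))
variable (hval0 : val 0 = 0)

include hmul

lemma val1 : val (1:k) = 0 := by
  have h := hmul 1 1 one_ne_zero one_ne_zero
  rw [mul_one] at h; omega

lemma valneg1 : val (-1:k) = 0 := by
  have h := hmul (-1) (-1) (by norm_num) (by norm_num)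
  rw [neg_mul_neg, one_mul] at h
  have h1 := val1 (val := val) hmul
  omega

lemma valneg (x : k) (hx : x ≠ 0) : val (-x) = val x := by
  have h := hmul (-1) x (by norm_num) hx
  rw [neg_one_mul] at h
  have h1 := valneg1 (val := val) hmul
  omega

lemma valinv (x : k) (hx : x ≠ 0) : val x⁻¹ = - val x := by
  have h := hmul x x⁻¹ hx (inv_ne_zero hx)
  rw [mul_inv_cancel₀ hx] at h
  have h1 := val1 (val := val) hmul
  omega

include hadd

lemma val_add_lt (x y : k) (hx : x ≠ 0) (hy : y ≠ 0) (h : val x < val y) :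
    x + y ≠ 0 ∧ val (x + y) = val x := by
  have hne : x + y ≠ 0 := by
    intro h0
    have hxy : x = -y := eq_neg_of_add_eq_zero_left h0
    rw [hxy, valneg hmul y hy] at h
    omega
  have h1 := hadd x y hx hy hne
  rw [min_eq_left h.le] at h1
  have h2 := hadd (x+y) (-y) hne (neg_ne_zero.mpr hy)
    (by rw [add_neg_cancel_right]; exact hx)
  rw [add_neg_cancel_right, valneg hmul y hy] at h2
  rcases min_le_iff.mp h2 with h3 | h3
  · exact ⟨hne, le_antisymm h3 h1⟩
  · omega

include hval0

lemma inm_ne (a : k) (h : 2 ≤ val a) : a ≠ 0 := by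
  intro h0; rw [h0, hval0] at h; omega

lemma inm_add (a b : k) (ha : a = 0 ∨ 2 ≤ val a) (hb : b = 0 ∨ 2 ≤ val b) :
    a + b = 0 ∨ 2 ≤ val (a + b) := by
  rcases ha with rfl | ha
  · simpa using hb
  rcases hb with rfl | hb
  · simp only [add_zero]; exact Or.inr ha
  by_cases hab : a + b = 0
  · exact Or.inl hab
  · right
    refine le_trans ?_ (hadd a b (inm_ne hmul hadd hval0 a ha) (inm_ne hmul hadd hval0 b hb) hab)
    exact le_min ha hb

lemma inm_neg (a : k) (ha : a = 0 ∨ 2 ≤ val a) : -a = 0 ∨ 2 ≤ val (-a) := by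
  rcases ha with rfl | ha
  · simp
  · right; rw [valneg hmul a (inm_ne hmul hadd hval0 a ha)]; exact ha

lemma inG_ne (z : k) (hz : z - 1 = 0 ∨ 2 ≤ val (z - 1)) : z ≠ 0 := by
  rcases hz with hz | hz
  · rw [sub_eq_zero] at hz; rw [hz]; exact one_ne_zero
  · intro h0
    rw [h0, zero_sub] at hz
    have := valneg1 (val := val) hmul
    omega

lemma inG_val (z : k) (hz : z - 1 = 0 ∨ 2 ≤ val (z - 1)) : val z = 0 := by
  rcases hz with hz | hz
  · rw [sub_eq_zero] at hz; rw [hz]; exact val1 hmul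
  · have h1 := val1 (val := val) hmul
    have h := val_add_lt hmul hadd (1:k) (z-1) one_ne_zero
      (inm_ne hmul hadd hval0 _ hz) (by omega)
    rw [add_sub_cancel] at h
    omega

lemma inG_mul (z w : k) (hz : z - 1 = 0 ∨ 2 ≤ val (z - 1))
    (hw : w - 1 = 0 ∨ 2 ≤ val (w - 1)) : z * w - 1 = 0 ∨ 2 ≤ val (z * w - 1) := by
  have key : z * w - 1 = (z - 1) * w + (w - 1) := by ring
  rw [key]
  refine inm_add hmul hadd hval0 _ _ ?_ hw
  rcases hz with hz | hz
  · left; rw [hz, zero_mul]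
  · right
    rw [hmul (z-1) w (inm_ne hmul hadd hval0 _ hz) (inG_ne hmul hadd hval0 w hw),
      inG_val hmul hadd hval0 w hw]
    omega

lemma inG_inv (z : k) (hz : z - 1 = 0 ∨ 2 ≤ val (z - 1)) :
    z⁻¹ - 1 = 0 ∨ 2 ≤ val (z⁻¹ - 1) := by
  have hz0 := inG_ne hmul hadd hval0 z hz
  rcases hz with hz | hz
  · rw [sub_eq_zero] at hz; left; rw [hz]; simp
  · right
    have key : z⁻¹ - 1 = (-(z - 1)) * z⁻¹ := by field_simp; ring
    rw [key, hmul _ _ (neg_ne_zero.mpr (inm_ne hmul hadd hval0 _ hz)) (inv_ne_zero hz0),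
      valneg hmul _ (inm_ne hmul hadd hval0 _ hz), valinv hmul z hz0,
      inG_val hmul hadd hval0 z (Or.inr hz)]
    omega

lemma inG_pow (z : k) (hz : z - 1 = 0 ∨ 2 ≤ val (z - 1)) (j : ℕ) :
    z ^ j - 1 = 0 ∨ 2 ≤ val (z ^ j - 1) := by
  induction j with
  | zero => left; simp
  | succ i ih =>
    rw [pow_succ]
    exact inG_mul hmul hadd hval0 _ _ ih hz

lemma inG_zpow (z : k) (hz : z - 1 = 0 ∨ 2 ≤ val (z - 1)) (j : ℤ) :
    z ^ j - 1 = 0 ∨ 2 ≤ val (z ^ j - 1) := by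
  cases j with
  | ofNat j => rw [Int.ofNat_eq_coe, zpow_natCast]; exact inG_pow hmul hadd hval0 z hz j
  | negSucc j =>
    rw [zpow_negSucc]
    exact inG_inv hmul hadd hval0 _ (inG_pow hmul hadd hval0 z hz (j+1))

lemma inG_sub (z w : k) (hz : z - 1 = 0 ∨ 2 ≤ val (z - 1))
    (hw : w - 1 = 0 ∨ 2 ≤ val (w - 1)) : z - w = 0 ∨ 2 ≤ val (z - w) := by
  have key : z - w = (z - 1) + (-(w - 1)) := by ring
  rw [key]
  exact inm_add hmul hadd hval0 _ _ hz (inm_neg hmul hadd hval0 _ hw)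

lemma val_zpow_pi (π : k) (hπ0 : π ≠ 0) (hπ1 : val π = 1) (j : ℤ) :
    val (π ^ j) = j := by
  induction j using Int.induction_on with
  | zero => rw [zpow_zero]; exact val1 hmul
  | succ i ih =>
    rw [zpow_add_one₀ hπ0, hmul _ _ (zpow_ne_zero _ hπ0) hπ0, ih, hπ1]
  | pred i ih =>
    rw [zpow_sub_one₀ hπ0, hmul _ _ (zpow_ne_zero _ hπ0) (inv_ne_zero hπ0), ih,
      valinv hmul π hπ0, hπ1]
    omega

lemma key_val (π : k) (hπ0 : π ≠ 0) (hπ1 : val π = 1) (c : ℤ) (hc : c ≠ 0) (v w : k)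
    (hv : v - 1 = 0 ∨ 2 ≤ val (v - 1)) (hw : w - 1 = 0 ∨ 2 ≤ val (w - 1)) :
    π ^ c * v - w ≠ 0 ∧ val (π ^ c * v - w) = min c 0 := by
  have hv0 := inG_ne hmul hadd hval0 v hv
  have hw0 := inG_ne hmul hadd hval0 w hw
  have hA : val (π ^ c * v) = c := by
    rw [hmul _ _ (zpow_ne_zero _ hπ0) hv0, val_zpow_pi hmul hadd hval0 π hπ0 hπ1,
      inG_val hmul hadd hval0 v hv]
    omega
  have hB : val (-w) = 0 := by
    rw [valneg hmul w hw0]; exact inG_val hmul hadd hval0 w hw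
  have hAne : π ^ c * v ≠ 0 := mul_ne_zero (zpow_ne_zero _ hπ0) hv0
  have hBne : (-w : k) ≠ 0 := neg_ne_zero.mpr hw0
  rcases lt_or_gt_of_ne hc with hlt | hgt
  · have h := val_add_lt hmul hadd (π ^ c * v) (-w) hAne hBne (by omega)
    rw [← sub_eq_add_neg] at h
    exact ⟨h.1, by omega⟩
  · have h := val_add_lt hmul hadd (-w) (π ^ c * v) hBne hAne (by omega)
    rw [neg_add_eq_sub] at h
    exact ⟨h.1, by omega⟩

end
end Stmt18Aux

open Stmt18Aux in
/-- With `val` a discrete valuation on `k`, uniformizer `π`, and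
`U = (1+πm) × (1+πm) ⊆ k²`, let `x = (x₁,x₂) ∈ U` and let `γ = diag(α₁^m β₁^n, α₂^m β₂^n)`
be a nontrivial element of the group `Δ` of the main construction (`α₂, β₁ ∈ 1+πm`;
`α₁, β₂` products of nontrivial powers of `π^p`, `p ≥ 2`, with elements of `1+πm`;
`(m,n) ≠ (0,0)`). Then for `y = (y₁,y₂) ∈ U` and `y' = γ y`, the slope
`(y'₂ − x₂)/(y'₁ − x₁)` of the line joining `x` to `y'` does not lie in `π + πm`
(whenever it is defined, i.e., `y'₁ ≠ x₁`). -/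
theorem stmt_18 (k : Type*) [Field k] (val : k → ℤ) (π : k)
    (hval0 : val 0 = 0) (hπ0 : π ≠ 0) (hπ1 : val π = 1)
    (hmul : ∀ x y : k, x ≠ 0 → y ≠ 0 → val (x * y) = val x + val y)
    (hadd : ∀ x y : k, x ≠ 0 → y ≠ 0 → x + y ≠ 0 → min (val x) (val y) ≤ val (x + y))
    (p : ℕ) (hp : 2 ≤ p)
    (α₁ α₂ β₁ β₂ : k) (hα₁0 : α₁ ≠ 0) (hβ₂0 : β₂ ≠ 0)
    (s t : ℤ) (hs : s ≠ 0) (ht : t ≠ 0)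
    (hvα₁ : val α₁ = (p : ℤ) * s) (hvβ₂ : val β₂ = (p : ℤ) * t)
    (hα₁u : α₁ * (π ^ val α₁)⁻¹ - 1 = 0 ∨ 2 ≤ val (α₁ * (π ^ val α₁)⁻¹ - 1))
    (hβ₂u : β₂ * (π ^ val β₂)⁻¹ - 1 = 0 ∨ 2 ≤ val (β₂ * (π ^ val β₂)⁻¹ - 1))
    (hα₂ : α₂ - 1 = 0 ∨ 2 ≤ val (α₂ - 1)) (hβ₁ : β₁ - 1 = 0 ∨ 2 ≤ val (β₁ - 1))
    (m n : ℤ) (hmn : (m, n) ≠ (0, 0))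
    (x₁ x₂ y₁ y₂ : k)
    (hx₁ : x₁ - 1 = 0 ∨ 2 ≤ val (x₁ - 1)) (hx₂ : x₂ - 1 = 0 ∨ 2 ≤ val (x₂ - 1))
    (hy₁ : y₁ - 1 = 0 ∨ 2 ≤ val (y₁ - 1)) (hy₂ : y₂ - 1 = 0 ∨ 2 ≤ val (y₂ - 1))
    (hden : α₁ ^ m * β₁ ^ n * y₁ - x₁ ≠ 0) :
    ¬ ∃ u : k, (u = 0 ∨ 2 ≤ val u) ∧
      (α₂ ^ m * β₂ ^ n * y₂ - x₂) / (α₁ ^ m * β₁ ^ n * y₁ - x₁) = π + u := by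
  rintro ⟨u, hu, hEq⟩
  -- the right-hand side is nonzero with valuation 1
  have hπu : π + u ≠ 0 ∧ val (π + u) = 1 := by
    rcases hu with rfl | hu
    · rw [add_zero]; exact ⟨hπ0, hπ1⟩
    · have hune : u ≠ 0 := inm_ne hmul hadd hval0 u hu
      have h := val_add_lt hmul hadd π u hπ0 hune (by omega)
      exact ⟨h.1, by omega⟩
  set D := α₁ ^ m * β₁ ^ n * y₁ - x₁ with hDdef
  set N := α₂ ^ m * β₂ ^ n * y₂ - x₂ with hNdef
  have hN0 : N ≠ 0 := by
    intro h0
    rw [h0, zero_div] at hEq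
    exact hπu.1 hEq.symm
  have hσ : val N - val D = 1 := by
    have h1 : val (N / D) = val N - val D := by
      rw [div_eq_mul_inv, hmul N D⁻¹ hN0 (inv_ne_zero hden), valinv hmul D hden]
      omega
    rw [hEq] at h1
    omega
  -- decompose α₁ and β₂
  rw [hvα₁] at hα₁u
  rw [hvβ₂] at hβ₂u
  set u₁ := α₁ * (π ^ ((p:ℤ) * s))⁻¹ with hu₁def
  set u₂ := β₂ * (π ^ ((p:ℤ) * t))⁻¹ with hu₂def
  have hpZ : (p:ℤ) ≠ 0 := by omega
  have hα₁eq : α₁ = π ^ ((p:ℤ) * s) * u₁ := by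
    rw [hu₁def, mul_comm α₁, ← mul_assoc, mul_inv_cancel₀ (zpow_ne_zero _ hπ0), one_mul]
  have hβ₂eq : β₂ = π ^ ((p:ℤ) * t) * u₂ := by
    rw [hu₂def, mul_comm β₂, ← mul_assoc, mul_inv_cancel₀ (zpow_ne_zero _ hπ0), one_mul]
  have hDeq : D = π ^ ((p:ℤ) * s * m) * (u₁ ^ m * (β₁ ^ n * y₁)) - x₁ := by
    rw [hDdef, hα₁eq, mul_zpow, ← zpow_mul]
    ring
  have hNeq : N = π ^ ((p:ℤ) * t * n) * (u₂ ^ n * (α₂ ^ m * y₂)) - x₂ := by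
    rw [hNdef, hβ₂eq, mul_zpow, ← zpow_mul]
    ring
  have hVD : u₁ ^ m * (β₁ ^ n * y₁) - 1 = 0 ∨ 2 ≤ val (u₁ ^ m * (β₁ ^ n * y₁) - 1) :=
    inG_mul hmul hadd hval0 _ _ (inG_zpow hmul hadd hval0 _ hα₁u m)
      (inG_mul hmul hadd hval0 _ _ (inG_zpow hmul hadd hval0 _ hβ₁ n) hy₁)
  have hVN : u₂ ^ n * (α₂ ^ m * y₂) - 1 = 0 ∨ 2 ≤ val (u₂ ^ n * (α₂ ^ m * y₂) - 1) :=
    inG_mul hmul hadd hval0 _ _ (inG_zpow hmul hadd hval0 _ hβ₂u n)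
      (inG_mul hmul hadd hval0 _ _ (inG_zpow hmul hadd hval0 _ hα₂ m) hy₂)
  by_cases hm : m = 0
  · -- then n ≠ 0
    have hn : n ≠ 0 := by
      intro hn0; exact hmn (by rw [hm, hn0])
    -- denominator lies in πm, so val D ≥ 2
    have hDval : 2 ≤ val D := by
      have hPD : D = 0 ∨ 2 ≤ val D := by
        rw [hDeq, hm]
        simp only [mul_zero, zpow_zero, one_mul]
        exact inG_sub hmul hadd hval0 _ _
          (inG_mul hmul hadd hval0 _ _ (inG_zpow hmul hadd hval0 _ hβ₁ n) hy₁) hx₁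
      rcases hPD with h | h
      · exact absurd h hden
      · exact h
    have hNval : val N = min ((p:ℤ) * t * n) 0 := by
      rw [hNeq]
      exact (key_val hmul hadd hval0 π hπ0 hπ1 _
        (mul_ne_zero (mul_ne_zero hpZ ht) hn) _ _ hVN hx₂).2
    have : val N ≤ 0 := by rw [hNval]; exact min_le_right _ _
    omega
  · by_cases hn : n = 0
    · -- m ≠ 0, n = 0 : numerator in πm, val D ≤ 0
      have hNval : 2 ≤ val N := by
        have hPN : N = 0 ∨ 2 ≤ val N := by
          rw [hNeq, hn]
          simp only [mul_zero, zpow_zero, one_mul]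
          exact inG_sub hmul hadd hval0 _ _
            (inG_mul hmul hadd hval0 _ _ (inG_zpow hmul hadd hval0 _ hα₂ m) hy₂) hx₂
        rcases hPN with h | h
        · exact absurd h hN0
        · exact h
      have hDval : val D = min ((p:ℤ) * s * m) 0 := by
        rw [hDeq]
        exact (key_val hmul hadd hval0 π hπ0 hπ1 _
          (mul_ne_zero (mul_ne_zero hpZ hs) hm) _ _ hVD hx₁).2
      have : val D ≤ 0 := by rw [hDval]; exact min_le_right _ _
      omega
    · -- m ≠ 0 and n ≠ 0 : both valuations are multiples of p
      have hDval : val D = min ((p:ℤ) * s * m) 0 := by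
        rw [hDeq]
        exact (key_val hmul hadd hval0 π hπ0 hπ1 _
          (mul_ne_zero (mul_ne_zero hpZ hs) hm) _ _ hVD hx₁).2
      have hNval : val N = min ((p:ℤ) * t * n) 0 := by
        rw [hNeq]
        exact (key_val hmul hadd hval0 π hπ0 hπ1 _
          (mul_ne_zero (mul_ne_zero hpZ ht) hn) _ _ hVN hx₂).2
      have hdvdD : (p:ℤ) ∣ val D := by
        rw [hDval]
        rcases min_choice ((p:ℤ) * s * m) 0 with h | h <;> rw [h]
        · exact ⟨s * m, by ring⟩
        · exact dvd_zero _
      have hdvdN : (p:ℤ) ∣ val N := by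
        rw [hNval]
        rcases min_choice ((p:ℤ) * t * n) 0 with h | h <;> rw [h]
        · exact ⟨t * n, by ring⟩
        · exact dvd_zero _
      have hdvd1 : (p:ℤ) ∣ 1 := by
        rw [← hσ]; exact dvd_sub hdvdN hdvdD
      have := Int.le_of_dvd one_pos hdvd1
      omega
end
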